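/- arXiv:1503.02592 — 2 statements merged into one kernel-verified Lean document; each statement's English description precedes it below -/
import Mathlib

section
/- The number of operations of the sieve of Eratosthenes up to n, namely ∑_{p ≤ √n, p prime} ⌊n/p⌋, is O(n log log n). -/
/-!
Chebyshev's bound `n# ≤ 4 ^ n` leaves room for fewer than `2 ^ (k + 2) / k` primes in the dyadic
block `[2 ^ k, 2 ^ (k + 1))`, so each block contributes at most `4 / k` to `∑ 1 / p`. Summing over
`k ≤ log₂ n` gives `∑_{p ≤ n} 1 / p ≤ 4 (2 + log log n)`, and `⌊n / p⌋ ≤ n / p` does the rest.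
-/

open Finset

theorem Real.log_natLog_two_le (n : ℕ) : Real.log (Nat.log 2 n) ≤ 1 + Real.log (Real.log n) := by
  rcases Nat.lt_or_ge n 2 with hn | hn
  · interval_cases n <;> simp
  have hK : (1 : ℝ) ≤ Nat.log 2 n := by exact_mod_cast Nat.log_pos one_lt_two hn
  have hlog : 0 < Real.log n := Real.log_pos (by exact_mod_cast hn)
  have hK_le : (Nat.log 2 n : ℝ) ≤ 2 * Real.log n :=
    calc (Nat.log 2 n : ℝ) ≤ Real.logb 2 n := by exact_mod_cast Real.natLog_le_logb n 2
      _ = Real.log n / Real.log 2 := rfl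
      _ ≤ 2 * Real.log n := by
        rw [div_le_iff₀ (Real.log_pos one_lt_two)]
        nlinarith [Real.log_two_gt_d9]
  calc Real.log (Nat.log 2 n) ≤ Real.log (2 * Real.log n) := Real.log_le_log (by linarith) hK_le
    _ = Real.log 2 + Real.log (Real.log n) := Real.log_mul two_ne_zero hlog.ne'
    _ ≤ 1 + Real.log (Real.log n) := by linarith [Real.log_two_lt_d9]

namespace Nat

theorem pow_card_primesLE_filter_le_four_pow (x m : ℕ) :
    x ^ #{p ∈ primesLE m | x ≤ p} ≤ 4 ^ m :=
  calc x ^ #{p ∈ primesLE m | x ≤ p}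
      ≤ ∏ p ∈ primesLE m with x ≤ p, p := pow_card_le_prod _ _ _ fun _ hp ↦ (mem_filter.mp hp).2
    _ ≤ ∏ p ∈ primesLE m, p :=
      prod_le_prod_of_subset_of_one_le' (filter_subset _ _)
        fun _ hp _ ↦ (one_lt_of_mem_primesLE hp).le
    _ = primorial m := (primorial_eq_prod_primesLE m).symm
    _ ≤ 4 ^ m := primorial_le_four_pow m

theorem card_primesLE_filter_log_eq_mul_le (n k : ℕ) :
    #{p ∈ primesLE n | Nat.log 2 p = k} * k ≤ 2 ^ (k + 2) := by
  have hsub : {p ∈ primesLE n | Nat.log 2 p = k} ⊆ {p ∈ primesLE (2 ^ (k + 1)) | 2 ^ k ≤ p} := by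
    intro p hp
    obtain ⟨hpn, rfl⟩ := mem_filter.mp hp
    have hprime := prime_of_mem_primesLE hpn
    refine mem_filter.mpr ⟨mem_primesLE.mpr ⟨?_, hprime⟩, pow_log_le_self 2 hprime.ne_zero⟩
    exact (lt_pow_succ_log_self one_lt_two p).le
  have : 2 ^ (k * #{p ∈ primesLE n | Nat.log 2 p = k}) ≤ 2 ^ 2 ^ (k + 2) :=
    calc 2 ^ (k * #{p ∈ primesLE n | Nat.log 2 p = k})
        = (2 ^ k) ^ #{p ∈ primesLE n | Nat.log 2 p = k} := pow_mul 2 _ _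
      _ ≤ (2 ^ k) ^ #{p ∈ primesLE (2 ^ (k + 1)) | 2 ^ k ≤ p} :=
        pow_le_pow_right₀ (one_le_pow₀ one_le_two) (card_le_card hsub)
      _ ≤ 4 ^ 2 ^ (k + 1) := pow_card_primesLE_filter_le_four_pow _ _
      _ = 2 ^ 2 ^ (k + 2) := by rw [show 4 = 2 ^ 2 from rfl, ← pow_mul, pow_succ 2 (k + 1)]; ring
  rw [mul_comm]
  exact (Nat.pow_le_pow_iff_right one_lt_two).mp this

theorem sum_inv_primesLE_filter_log_eq_le (n : ℕ) {k : ℕ} (hk : 0 < k) :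
    ∑ p ∈ primesLE n with Nat.log 2 p = k, (p : ℝ)⁻¹ ≤ 4 / k := by
  have hterm : ∀ p ∈ {p ∈ primesLE n | Nat.log 2 p = k}, (p : ℝ)⁻¹ ≤ ((2 : ℝ) ^ k)⁻¹ := by
    intro p hp
    obtain ⟨hpn, rfl⟩ := mem_filter.mp hp
    have : ((2 ^ Nat.log 2 p : ℕ) : ℝ) ≤ p := by
      exact_mod_cast pow_log_le_self 2 (prime_of_mem_primesLE hpn).ne_zero
    exact inv_anti₀ (by positivity) (by exact_mod_cast this)
  have hcard : (#{p ∈ primesLE n | Nat.log 2 p = k} : ℝ) * k ≤ 2 ^ (k + 2) := by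
    exact_mod_cast card_primesLE_filter_log_eq_mul_le n k
  calc ∑ p ∈ primesLE n with Nat.log 2 p = k, (p : ℝ)⁻¹
      ≤ #{p ∈ primesLE n | Nat.log 2 p = k} * ((2 : ℝ) ^ k)⁻¹ :=
        (sum_le_card_nsmul _ _ _ hterm).trans_eq (nsmul_eq_mul _ _)
    _ ≤ 2 ^ (k + 2) / k * ((2 : ℝ) ^ k)⁻¹ := by
      gcongr
      rwa [le_div_iff₀ (by exact_mod_cast hk)]
    _ = 4 / k := by field_simp; ring

theorem sum_inv_primesLE_le_four_mul_harmonic (n : ℕ) :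
    ∑ p ∈ primesLE n, (p : ℝ)⁻¹ ≤ 4 * harmonic (Nat.log 2 n) := by
  have hmaps : ∀ p ∈ primesLE n, Nat.log 2 p ∈ Icc 1 (Nat.log 2 n) := fun p hp ↦
    mem_Icc.mpr ⟨Nat.log_pos one_lt_two (two_le_of_mem_primesLE hp),
      Nat.log_mono_right (le_of_mem_primesLE hp)⟩
  calc ∑ p ∈ primesLE n, (p : ℝ)⁻¹
      = ∑ k ∈ Icc 1 (Nat.log 2 n), ∑ p ∈ primesLE n with Nat.log 2 p = k, (p : ℝ)⁻¹ :=
        (sum_fiberwise_of_maps_to hmaps _).symm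
    _ ≤ ∑ k ∈ Icc 1 (Nat.log 2 n), 4 * (k : ℝ)⁻¹ := sum_le_sum fun k hk ↦
        (sum_inv_primesLE_filter_log_eq_le n (mem_Icc.mp hk).1).trans_eq (div_eq_mul_inv _ _)
    _ = 4 * harmonic (Nat.log 2 n) := by
        rw [← mul_sum, harmonic_eq_sum_Icc]; push_cast; rfl

theorem sum_inv_primesLE_le_log_log (n : ℕ) :
    ∑ p ∈ primesLE n, (p : ℝ)⁻¹ ≤ 4 * (2 + Real.log (Real.log n)) :=
  calc ∑ p ∈ primesLE n, (p : ℝ)⁻¹ ≤ 4 * harmonic (Nat.log 2 n) :=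
        sum_inv_primesLE_le_four_mul_harmonic n
    _ ≤ 4 * (1 + Real.log (Nat.log 2 n)) := by gcongr; exact harmonic_le_one_add_log _
    _ ≤ 4 * (2 + Real.log (Real.log n)) := by linarith [Real.log_natLog_two_le n]

end Nat

theorem eratosthenes_ops :
    ∃ C : ℝ, ∀ n : ℕ, 3 ≤ n →
      (∑ p ∈ (Finset.range (n + 1)).filter (fun p => p.Prime ∧ p ^ 2 ≤ n),
          ((n / p : ℕ) : ℝ)) ≤ C * n * Real.log (Real.log n) := by
  set c := Real.log (Real.log 3)
  have hc : 0 < c := Real.log_pos <| by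
    rw [Real.lt_log_iff_exp_lt three_pos]; linarith [Real.exp_one_lt_d9]
  refine ⟨4 * (2 / c + 1), fun n hn ↦ ?_⟩
  have hL : c ≤ Real.log (Real.log n) :=
    Real.log_le_log (Real.log_pos (by norm_num)) (Real.log_le_log three_pos (by exact_mod_cast hn))
  calc ∑ p ∈ (Finset.range (n + 1)).filter (fun p => p.Prime ∧ p ^ 2 ≤ n), ((n / p : ℕ) : ℝ)
      ≤ ∑ p ∈ Nat.primesLE n, ((n / p : ℕ) : ℝ) :=
        sum_le_sum_of_subset_of_nonneg (monotone_filter_right _ fun _ _ h ↦ h.1)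
          fun _ _ _ ↦ by positivity
    _ ≤ ∑ p ∈ Nat.primesLE n, (n : ℝ) * (p : ℝ)⁻¹ :=
        sum_le_sum fun _ _ ↦ Nat.cast_div_le.trans_eq (div_eq_mul_inv _ _)
    _ = n * ∑ p ∈ Nat.primesLE n, (p : ℝ)⁻¹ := (mul_sum _ _ _).symm
    _ ≤ n * (4 * (2 + Real.log (Real.log n))) := by gcongr; exact Nat.sum_inv_primesLE_le_log_log n
    _ ≤ 4 * (2 / c + 1) * n * Real.log (Real.log n) := by
        have : 2 ≤ 2 / c * Real.log (Real.log n) := by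
          rw [div_mul_eq_mul_div, le_div_iff₀ hc]; linarith
        nlinarith [(Nat.cast_nonneg n : (0 : ℝ) ≤ n)]
end

section
/- For natural numbers n ≥ 2 and 2 ≤ ℓ ≤ n, the sum over integers m in [n, n+ℓ] of ∑_{q ∣ m, q prime, q > ℓ} log q is O(ℓ log n). -/
/-!
Distinct primes dividing `m` multiply to a divisor of `m`, so any family of them has total
logarithm at most `log m ≤ log (2n) ≤ 2 log n`; summing over the `ℓ + 1 ≤ 2ℓ` integers of
`[n, n + ℓ]` gives the bound with `C = 4`.
-/

open Finset

theorem Nat.sum_log_le_log_of_subset_primeFactors {m : ℕ} {s : Finset ℕ}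
    (hs : s ⊆ m.primeFactors) : ∑ q ∈ s, Real.log q ≤ Real.log m := by
  rcases eq_or_ne m 0 with rfl | hm
  · simp_all
  have hprime : ∀ q ∈ s, q.Prime := fun q hq => Nat.prime_of_mem_primeFactors (hs hq)
  have hdvd : ∏ q ∈ s, q ∣ m :=
    (Finset.prod_dvd_prod_of_subset _ _ _ hs).trans (Nat.prod_primeFactors_dvd m)
  have hpos : 0 < ∏ q ∈ s, q := Finset.prod_pos fun q hq => (hprime q hq).pos
  calc ∑ q ∈ s, Real.log q
      = Real.log (∏ q ∈ s, q : ℕ) := by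
        push_cast
        exact (Real.log_prod fun q hq => by exact_mod_cast (hprime q hq).ne_zero).symm
    _ ≤ Real.log m := Real.log_le_log (by exact_mod_cast hpos)
        (by exact_mod_cast Nat.le_of_dvd (Nat.pos_of_ne_zero hm) hdvd)

theorem Real.log_two_mul_le_two_mul_log {x : ℝ} (hx : 2 ≤ x) :
    Real.log (2 * x) ≤ 2 * Real.log x := by
  rw [Real.log_mul two_ne_zero (by linarith), two_mul]
  gcongr

theorem large_prime_divisors_log_sum :
    ∃ C : ℝ, ∀ n ℓ : ℕ, 2 ≤ n → 2 ≤ ℓ → ℓ ≤ n →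
      (∑ m ∈ Finset.Icc n (n + ℓ),
          ∑ q ∈ m.primeFactors.filter (fun q => ℓ < q), Real.log q)
        ≤ C * ℓ * Real.log n := by
  refine ⟨4, fun n ℓ hn hℓ hℓn => ?_⟩
  have hn' : (2 : ℝ) ≤ n := by exact_mod_cast hn
  have hterm : ∀ m ∈ Finset.Icc n (n + ℓ),
      ∑ q ∈ m.primeFactors.filter (fun q => ℓ < q), Real.log q ≤ Real.log (2 * n) := by
    intro m hm
    have hm : n ≤ m ∧ m ≤ 2 * n := by rw [Finset.mem_Icc] at hm; omega
    refine (Nat.sum_log_le_log_of_subset_primeFactors (filter_subset _ _)).trans ?_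
    exact Real.log_le_log (by exact_mod_cast (by omega : 0 < m)) (by exact_mod_cast hm.2)
  calc _ ≤ ∑ _m ∈ Finset.Icc n (n + ℓ), Real.log (2 * n) := sum_le_sum hterm
    _ = (ℓ + 1 : ℝ) * Real.log (2 * n) := by
        rw [sum_const, Nat.card_Icc, nsmul_eq_mul, show n + ℓ + 1 - n = ℓ + 1 by omega, Nat.cast_succ]
    _ ≤ (2 * ℓ) * (2 * Real.log n) := by
        gcongr
        · exact Real.log_nonneg (by linarith)
        · exact_mod_cast (by omega : ℓ + 1 ≤ 2 * ℓ)
        · exact Real.log_two_mul_le_two_mul_log hn'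
    _ = 4 * ℓ * Real.log n := by ring
end
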